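/- Let n be an integer and s a real number with n > 2s > 0, let 0 < α ≤ (n+2s)/(n−2s), ε ≥ 0, γ > 0, and σ := (n+2s)/2 − α(n−2s)/2. Let u : ℝⁿ → ℝ be nonnegative and continuous such that, for every x ∈ ℝⁿ, the function y ↦ |x − y|^{2s−n} F_{ε,u}(y) is Lebesgue integrable and u(x) = γ ∫_{ℝⁿ} |x − y|^{2s−n} F_{ε,u}(y) dy. If u(x₀) = 0 for some x₀ ∈ ℝⁿ, then u is identically zero on ℝⁿ. -/
import Mathlib


open MeasureTheory

/-- The nonlinearity `F_{ε,u}(y) = ε (2/(1+|y|²))^{2s} u(y) + (2/(1+|y|²))^{σ} u(y)^{α}`. -/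
noncomputable def ieF {n : ℕ} (s σ α ε : ℝ) (u : EuclideanSpace ℝ (Fin n) → ℝ)
    (y : EuclideanSpace ℝ (Fin n)) : ℝ :=
  ε * (2 / (1 + ‖y‖ ^ 2)) ^ (2 * s) * u y + (2 / (1 + ‖y‖ ^ 2)) ^ σ * u y ^ α

/-- a nonnegative continuous solution of the integral equation which
    vanishes somewhere is identically zero. -/
theorem stmt_11 (n : ℕ) (s α ε γ σ : ℝ)
    (hs : 0 < 2 * s) (hns : 2 * s < (n : ℝ))
    (hα : 0 < α) (hα' : α ≤ ((n : ℝ) + 2 * s) / ((n : ℝ) - 2 * s))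
    (hε : 0 ≤ ε) (hγ : 0 < γ)
    (hσ : σ = ((n : ℝ) + 2 * s) / 2 - α * ((n : ℝ) - 2 * s) / 2)
    (u : EuclideanSpace ℝ (Fin n) → ℝ) (hu0 : ∀ y, 0 ≤ u y) (hucont : Continuous u)
    (hsol : ∀ x : EuclideanSpace ℝ (Fin n),
      Integrable (fun y => ‖x - y‖ ^ (2 * s - (n : ℝ)) * ieF s σ α ε u y) ∧
      u x = γ * ∫ y, ‖x - y‖ ^ (2 * s - (n : ℝ)) * ieF s σ α ε u y)
    (x₀ : EuclideanSpace ℝ (Fin n)) (hx₀ : u x₀ = 0) :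
    ∀ x, u x = 0 := by
  have hn : 0 < n := by
    have : (0 : ℝ) < n := lt_trans hs hns
    exact_mod_cast this
  have hFnn : ∀ y, 0 ≤ ieF s σ α ε u y := by
    intro y
    have hb : (0 : ℝ) ≤ 2 / (1 + ‖y‖ ^ 2) := by positivity
    have h1 : 0 ≤ ε * (2 / (1 + ‖y‖ ^ 2)) ^ (2 * s) * u y :=
      mul_nonneg (mul_nonneg hε (Real.rpow_nonneg hb _)) (hu0 y)
    have h2 : 0 ≤ (2 / (1 + ‖y‖ ^ 2)) ^ σ * u y ^ α :=
      mul_nonneg (Real.rpow_nonneg hb _) (Real.rpow_nonneg (hu0 y) _)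
    exact add_nonneg h1 h2
  have hint0 := (hsol x₀).1
  have hnn0 : ∀ y, 0 ≤ ‖x₀ - y‖ ^ (2 * s - (n : ℝ)) * ieF s σ α ε u y := fun y =>
    mul_nonneg (Real.rpow_nonneg (norm_nonneg _) _) (hFnn y)
  have hI0 : ∫ y, ‖x₀ - y‖ ^ (2 * s - (n : ℝ)) * ieF s σ α ε u y = 0 := by
    have := (hsol x₀).2
    rw [hx₀] at this
    have := this.symm
    rcases mul_eq_zero.mp this with h | h
    · exact absurd h (ne_of_gt hγ)
    · exact h
  have hae : (fun y => ‖x₀ - y‖ ^ (2 * s - (n : ℝ)) * ieF s σ α ε u y) =ᵐ[volume] 0 := by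
    rw [← MeasureTheory.integral_eq_zero_iff_of_nonneg hnn0 hint0]
    exact hI0
  haveI : Nontrivial (EuclideanSpace ℝ (Fin n)) := by
    haveI : Nonempty (Fin n) := ⟨⟨0, hn⟩⟩
    infer_instance
  have hsing : (volume : Measure (EuclideanSpace ℝ (Fin n))) {x₀} = 0 :=
    measure_singleton x₀
  have haeF : ∀ᵐ y : EuclideanSpace ℝ (Fin n), ieF s σ α ε u y = 0 := by
    have hne : ∀ᵐ y : EuclideanSpace ℝ (Fin n), y ≠ x₀ := by
      rw [MeasureTheory.ae_iff]
      simpa using hsing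
    filter_upwards [hae, hne] with y hy hyne
    have hnorm : (0 : ℝ) < ‖x₀ - y‖ := by
      rw [norm_pos_iff, sub_ne_zero]
      exact fun h => hyne h.symm
    have hpow : (0 : ℝ) < ‖x₀ - y‖ ^ (2 * s - (n : ℝ)) := Real.rpow_pos_of_pos hnorm _
    have hy' : ‖x₀ - y‖ ^ (2 * s - (n : ℝ)) * ieF s σ α ε u y = 0 := hy
    rcases mul_eq_zero.mp hy' with h | h
    · exact absurd h (ne_of_gt hpow)
    · exact h
  intro x
  have hIx : ∫ y, ‖x - y‖ ^ (2 * s - (n : ℝ)) * ieF s σ α ε u y = 0 := by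
    have : (fun y => ‖x - y‖ ^ (2 * s - (n : ℝ)) * ieF s σ α ε u y) =ᵐ[volume] 0 := by
      filter_upwards [haeF] with y hy
      simp [hy]
    rw [MeasureTheory.integral_congr_ae this]; simp
  rw [(hsol x).2, hIx, mul_zero]
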